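/- Let f(x) = x^s / s on (0,1] with 0 < s < 1 and q ≥ 1. Then the function x ↦ |f'(x)|^q = x^((s-1)q) is monotonically decreasing on (0,1] and is s-geometrically convex on (0,1], i.e., for all x, y ∈ (0,1] and t ∈ [0,1], (x^t y^(1-t))^((s-1)q) ≤ (x^((s-1)q))^(t^s) · (y^((s-1)q))^((1-t)^s). -/
import Mathlib

open Set MeasureTheory Real

noncomputable def g1 (α : ℝ) : ℝ :=
  if α = 1 then 1/2 else (α * Real.log α - α + 1) / (Real.log α)^2

noncomputable def g2 (α : ℝ) : ℝ :=
  if α = 1 then 1 else (α - 1) / Real.log α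

def SGeomConvexOn (s : ℝ) (I : Set ℝ) (f : ℝ → ℝ) : Prop :=
  ∀ x ∈ I, ∀ y ∈ I, ∀ t ∈ Set.Icc (0:ℝ) 1,
    f (x ^ t * y ^ (1 - t)) ≤ f x ^ (t ^ s) * f y ^ ((1 - t) ^ s)

theorem example_sgeom (s q : ℝ) (hs : 0 < s) (hs1 : s < 1) (hq : 1 ≤ q) :
    AntitoneOn (fun x : ℝ => x ^ ((s - 1) * q)) (Set.Ioc 0 1) ∧
      ∀ x ∈ Set.Ioc (0:ℝ) 1, ∀ y ∈ Set.Ioc (0:ℝ) 1, ∀ t ∈ Set.Icc (0:ℝ) 1,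
        (x ^ t * y ^ (1 - t)) ^ ((s - 1) * q) ≤
          (x ^ ((s - 1) * q)) ^ (t ^ s) * (y ^ ((s - 1) * q)) ^ ((1 - t) ^ s) := by
  set c := (s - 1) * q with hcdef
  have hc : c ≤ 0 :=
    mul_nonpos_of_nonpos_of_nonneg (by linarith) (by linarith)
  refine ⟨fun a ha b hb hab => Real.rpow_le_rpow_of_nonpos ha.1 hab hc, ?_⟩
  intro x hx y hy t ht
  have key : ∀ u : ℝ, 0 ≤ u → u ≤ 1 → u ≤ u ^ s := by
    intro u hu0 hu1
    rcases eq_or_lt_of_le hu0 with h | h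
    · rw [← h, Real.zero_rpow hs.ne']
    · calc u = u ^ (1:ℝ) := (Real.rpow_one u).symm
        _ ≤ u ^ s := Real.rpow_le_rpow_of_exponent_ge h hu1 hs1.le
  have step : ∀ z : ℝ, 0 < z → z ≤ 1 → ∀ u : ℝ, 0 ≤ u → u ≤ 1 →
      (z ^ u) ^ c ≤ (z ^ c) ^ (u ^ s) := by
    intro z hz0 hz1 u hu0 hu1
    rw [← Real.rpow_mul hz0.le, ← Real.rpow_mul hz0.le]
    apply Real.rpow_le_rpow_of_exponent_ge hz0 hz1
    have h1 : u ≤ u ^ s := key u hu0 hu1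
    nlinarith [mul_le_mul_of_nonpos_right h1 hc]
  have ht0 := ht.1
  have ht1 := ht.2
  have h1 : (x ^ t) ^ c ≤ (x ^ c) ^ (t ^ s) := step x hx.1 hx.2 t ht0 ht1
  have h2 : (y ^ (1 - t)) ^ c ≤ (y ^ c) ^ ((1 - t) ^ s) :=
    step y hy.1 hy.2 (1 - t) (by linarith) (by linarith)
  have hxpos : (0:ℝ) < x ^ t := Real.rpow_pos_of_pos hx.1 t
  have hypos : (0:ℝ) < y ^ (1 - t) := Real.rpow_pos_of_pos hy.1 (1 - t)
  calc (x ^ t * y ^ (1 - t)) ^ c = (x ^ t) ^ c * (y ^ (1 - t)) ^ c :=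
        Real.mul_rpow hxpos.le hypos.le
    _ ≤ (x ^ c) ^ (t ^ s) * (y ^ c) ^ ((1 - t) ^ s) := by
        apply mul_le_mul h1 h2 (Real.rpow_nonneg hypos.le c)
        exact Real.rpow_nonneg (Real.rpow_nonneg hx.1.le c) _
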